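/- Let G be a countable group equipped with a left-invariant proper metric d, and suppose that every subgroup of G is separable (for example, G virtually polycyclic). Then every subgroup H of G has bounded packing in G: for every positive constant D there exists a natural number N such that every collection of left H-cosets in G that are pairwise at distance at most D from each other has cardinality at most N. -/

import Mathlib

open scoped Pointwise

/-!
Separability of `H` lets one choose a finite-index subgroup `K ≥ H` that contains no element of
the finite ball of radius `D + 1` outside `H`. If two `H`-cosets `gH`, `g'H` at distance at most
`D` lie in the same `K`-coset, then some `x⁻¹ y` with `x ∈ gH`, `y ∈ g'H` (the infimum need not be
attained, hence the slack `+ 1`) lies in both `K` and the ball, hence in `H`, so `gH = g'H`.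
Thus a `D`-packing of `H`-cosets injects into `G ⧸ K` and has at most `[G : K]` elements.
-/

noncomputable def cosetDist {G : Type*} (d : G → G → ℝ) (A B : Set G) : ℝ :=
  sInf {r : ℝ | ∃ x ∈ A, ∃ y ∈ B, d x y = r}

theorem exists_lt_of_cosetDist_lt {α : Type*} {d : α → α → ℝ} {A B : Set α} {r : ℝ}
    (hA : A.Nonempty) (hB : B.Nonempty) (h : cosetDist d A B < r) :
    ∃ x ∈ A, ∃ y ∈ B, d x y < r := by
  obtain ⟨x, hx⟩ := hA
  obtain ⟨y, hy⟩ := hB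
  have hne : {r : ℝ | ∃ x ∈ A, ∃ y ∈ B, d x y = r}.Nonempty := ⟨d x y, x, hx, y, hy, rfl⟩
  obtain ⟨_, ⟨x, hx, y, hy, rfl⟩, hlt⟩ := exists_lt_of_csInf_lt hne h
  exact ⟨x, hx, y, hy, hlt⟩

namespace Subgroup

variable {G : Type*} [Group G]

theorem exists_finiteIndex_le_forall_mem_imp_mem {H : Subgroup G} {𝒮 : Set (Subgroup G)}
    (h𝒮 : ∀ K ∈ 𝒮, K.FiniteIndex) (hH : H = sInf 𝒮) {F : Set G} (hF : F.Finite) :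
    ∃ K : Subgroup G, K.FiniteIndex ∧ H ≤ K ∧ ∀ f ∈ F, f ∈ K → f ∈ H := by
  induction F, hF using Set.Finite.induction_on with
  | empty => exact ⟨⊤, inferInstance, le_top, by simp⟩
  | @insert a F _ _ ih =>
    obtain ⟨K, hK, hHK, hKF⟩ := ih
    by_cases ha : a ∈ H
    · refine ⟨K, hK, hHK, ?_⟩
      rintro f (rfl | hf) hfK
      exacts [ha, hKF f hf hfK]
    · obtain ⟨K', hK'𝒮, haK'⟩ : ∃ K' ∈ 𝒮, a ∉ K' := by
        simpa [hH, mem_sInf] using ha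
      have := h𝒮 K' hK'𝒮
      refine ⟨K ⊓ K', inferInstance, le_inf hHK (hH ▸ sInf_le hK'𝒮), ?_⟩
      rintro f (rfl | hf) hfK
      exacts [absurd hfK.2 haK', hKF f hf hfK.1]

end Subgroup

section CosetPacking

variable {G : Type*} [Group G] {d : G → G → ℝ}
  (d_leftInvariant : ∀ g x y : G, d (g * x) (g * y) = d x y)
  {H K : Subgroup G} {R : ℝ} (hHK : H ≤ K) (hKH : ∀ f, d 1 f ≤ R → f ∈ K → f ∈ H)
include d_leftInvariant hHK hKH

theorem inv_mul_mem_of_cosetDist_lt {g g' : G}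
    (hdist : cosetDist d (g • (H : Set G)) (g' • (H : Set G)) < R) (hK : g⁻¹ * g' ∈ K) :
    g⁻¹ * g' ∈ H := by
  obtain ⟨_, ⟨h₁, hh₁, rfl⟩, _, ⟨h₂, hh₂, rfl⟩, hlt⟩ :=
    exists_lt_of_cosetDist_lt (Set.smul_set_nonempty.2 ⟨1, H.one_mem⟩)
      (Set.smul_set_nonempty.2 ⟨1, H.one_mem⟩) hdist
  have hball : d 1 ((g * h₁)⁻¹ * (g' * h₂)) ≤ R := by
    rw [← d_leftInvariant (g * h₁), mul_inv_cancel_left, mul_one]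
    exact hlt.le
  have hconj : (g * h₁)⁻¹ * (g' * h₂) = h₁⁻¹ * (g⁻¹ * g') * h₂ := by group
  have hmemK : (g * h₁)⁻¹ * (g' * h₂) ∈ K := by
    rw [hconj]
    exact K.mul_mem (K.mul_mem (K.inv_mem (hHK hh₁)) hK) (hHK hh₂)
  have hmemH := hKH _ hball hmemK
  rw [hconj] at hmemH
  simpa [H.mul_mem_cancel_right hh₂, H.mul_mem_cancel_left (H.inv_mem hh₁)] using hmemH

theorem finite_and_ncard_le_index_of_cosetDist_lt [K.FiniteIndex] {𝒞 : Set (Set G)}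
    (hcoset : ∀ A ∈ 𝒞, ∃ g : G, A = g • (H : Set G))
    (hdist : ∀ A ∈ 𝒞, ∀ B ∈ 𝒞, cosetDist d A B < R) :
    𝒞.Finite ∧ 𝒞.ncard ≤ K.index := by
  choose g hg using fun A : 𝒞 => hcoset A A.2
  have hinj : Function.Injective fun A : 𝒞 => (g A : G ⧸ K) := by
    intro A B hAB
    have hdistAB := hdist A A.2 B B.2
    rw [hg A, hg B] at hdistAB
    refine Subtype.ext ?_
    rw [hg A, hg B, leftCoset_eq_iff]
    exact inv_mul_mem_of_cosetDist_lt d_leftInvariant hHK hKH hdistAB (QuotientGroup.eq.1 hAB)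
  have : Finite 𝒞 := Finite.of_injective _ hinj
  refine ⟨Set.toFinite 𝒞, ?_⟩
  rw [← Nat.card_coe_set_eq]
  exact Nat.card_le_card_of_injective _ hinj

end CosetPacking

theorem every_subgroup_bounded_packing_of_all_separable_general
    {G : Type*} [Group G]
    (d : G → G → ℝ)
    (d_leftInvariant : ∀ g x y : G, d (g * x) (g * y) = d x y)
    (d_proper : ∀ R : ℝ, 0 < R → {g : G | d 1 g ≤ R}.Finite)
    (h_all_separable : ∀ H : Subgroup G, ∃ 𝒮 : Set (Subgroup G),
      (∀ K ∈ 𝒮, K.FiniteIndex) ∧ H = sInf 𝒮) :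
    ∀ H : Subgroup G, ∀ D : ℝ, 0 < D → ∃ N : ℕ,
      ∀ 𝒞 : Set (Set G),
        (∀ A ∈ 𝒞, ∃ g : G, A = g • (H : Set G)) →
        (∀ A ∈ 𝒞, ∀ B ∈ 𝒞, cosetDist d A B ≤ D) →
        𝒞.Finite ∧ 𝒞.ncard ≤ N := by
  intro H D hD
  obtain ⟨𝒮, h𝒮, hH⟩ := h_all_separable H
  obtain ⟨K, hK, hHK, hKH⟩ :=
    Subgroup.exists_finiteIndex_le_forall_mem_imp_mem h𝒮 hH (d_proper (D + 1) (by linarith))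
  refine ⟨K.index, fun 𝒞 hcoset hdist => ?_⟩
  exact finite_and_ncard_le_index_of_cosetDist_lt d_leftInvariant hHK hKH hcoset
    fun A hA B hB => (hdist A hA B hB).trans_lt (lt_add_one D)

/-- If every subgroup of a countable group `G` with a left-invariant proper
metric `d` is separable, then every subgroup of `G` has bounded packing in `G`. -/
theorem every_subgroup_bounded_packing_of_all_separable
    {G : Type*} [Group G] [Countable G]
    (d : G → G → ℝ)
    (d_self : ∀ x y : G, d x y = 0 ↔ x = y)
    (d_symm : ∀ x y : G, d x y = d y x)
    (d_triangle : ∀ x y z : G, d x z ≤ d x y + d y z)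
    (d_leftInvariant : ∀ g x y : G, d (g * x) (g * y) = d x y)
    (d_proper : ∀ R : ℝ, 0 < R → {g : G | d 1 g ≤ R}.Finite)
    (h_all_separable : ∀ H : Subgroup G, ∃ 𝒮 : Set (Subgroup G),
      (∀ K ∈ 𝒮, K.FiniteIndex) ∧ H = sInf 𝒮) :
    ∀ H : Subgroup G, ∀ D : ℝ, 0 < D → ∃ N : ℕ,
      ∀ 𝒞 : Set (Set G),
        (∀ A ∈ 𝒞, ∃ g : G, A = g • (H : Set G)) →
        (∀ A ∈ 𝒞, ∀ B ∈ 𝒞, cosetDist d A B ≤ D) →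
        𝒞.Finite ∧ 𝒞.ncard ≤ N :=
  every_subgroup_bounded_packing_of_all_separable_general d d_leftInvariant d_proper h_all_separable
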